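/- arXiv:2209.04088 — 7 statements merged into one kernel-verified Lean document; each statement's English description precedes it below -/
import Mathlib

section
/- For n ≥ 3, the function f defined by f(x) = x^{n-1/2} for x ≥ 0 and f(x) = (-1)^{n-1}(-x)^{n-1/2} for x < 0 is (n-1) times Peano differentiable at 0 with all Peano derivatives f_{(0)}(0) = ... = f_{(n-1)}(0) = 0, its n-th symmetric Riemann derivative at 0 exists and equals 0, but its n-th Peano derivative at 0 does not exist. -/
open Filter Topology Finset

open Asymptotics in
lemma aux_poly_isLittleO : ∀ (m : ℕ) (a : ℕ → ℝ),
    ((fun x : ℝ => ∑ j ∈ Finset.range (m+1), a j * x^j) =o[𝓝[≠] (0:ℝ)] fun x => x^m) →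
    ∀ j ≤ m, a j = 0 := by
  intro m
  induction m with
  | zero =>
    intro a h j hj
    interval_cases j
    have h1 : Tendsto (fun _ : ℝ => a 0) (𝓝[≠] (0:ℝ)) (𝓝 0) := by
      rw [← isLittleO_one_iff ℝ]
      simpa using h
    exact tendsto_nhds_unique tendsto_const_nhds h1
  | succ m ih =>
    intro a h
    have ha0 : a 0 = 0 := by
      have h1 : Tendsto (fun x : ℝ => ∑ j ∈ Finset.range (m+2), a j * x^j) (𝓝[≠] (0:ℝ)) (𝓝 0) := by
        refine h.isBigO.trans_tendsto ?_
        have : Tendsto (fun x : ℝ => x^(m+1)) (𝓝 (0:ℝ)) (𝓝 ((0:ℝ)^(m+1))) :=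
          (continuous_pow (m+1)).tendsto 0
        simpa using this.mono_left nhdsWithin_le_nhds
      have h2 : Tendsto (fun x : ℝ => ∑ j ∈ Finset.range (m+2), a j * x^j) (𝓝[≠] (0:ℝ))
          (𝓝 (a 0)) := by
        have hc : Continuous (fun x : ℝ => ∑ j ∈ Finset.range (m+2), a j * x^j) := by
          fun_prop
        have := (hc.tendsto 0).mono_left (nhdsWithin_le_nhds (s := {(0:ℝ)}ᶜ))
        have hv : ∑ j ∈ Finset.range (m+2), a j * (0:ℝ)^j = a 0 := by
          rw [Finset.sum_range_succ']
          simp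
        rwa [hv] at this
      exact tendsto_nhds_unique h2 h1
    have key : (fun x : ℝ => ∑ j ∈ Finset.range (m+1), a (j+1) * x^j) =o[𝓝[≠] (0:ℝ)]
        fun x => x^m := by
      rw [isLittleO_iff] at h ⊢
      intro ε hε
      filter_upwards [h hε, self_mem_nhdsWithin] with x hx hx0
      have hx0' : x ≠ 0 := hx0
      have hsum : ∑ j ∈ Finset.range (m+2), a j * x^j
          = x * ∑ j ∈ Finset.range (m+1), a (j+1) * x^j := by
        rw [Finset.sum_range_succ', Finset.mul_sum]
        simp only [ha0, zero_mul, pow_zero, mul_one, add_zero]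
        exact Finset.sum_congr rfl fun j _ => by ring
      rw [hsum] at hx
      have h1 : ‖x * ∑ j ∈ Finset.range (m+1), a (j+1) * x^j‖
          = ‖x‖ * ‖∑ j ∈ Finset.range (m+1), a (j+1) * x^j‖ := norm_mul _ _
      have h2 : ‖x^(m+1)‖ = ‖x‖ * ‖x^m‖ := by
        rw [pow_succ]; rw [norm_mul]; ring
      rw [h1, h2] at hx
      have hxpos : 0 < ‖x‖ := norm_pos_iff.mpr hx0'
      nlinarith [hx, hxpos, norm_nonneg (x^m)]
    have hnext := ih (fun j => a (j+1)) key
    intro j hj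
    match j with
    | 0 => exact ha0
    | k+1 => exact hnext k (by omega)

theorem symmetric_riemann_does_not_imply_peano
    (n : ℕ) (hn : 3 ≤ n)
    (f : ℝ → ℝ)
    (hf : ∀ x : ℝ, f x = if 0 ≤ x then x ^ ((n : ℝ) - 1/2)
      else (-1 : ℝ) ^ (n - 1) * (-x) ^ ((n : ℝ) - 1/2)) :
    -- (n-1) times Peano differentiable at 0 with all Peano derivatives 0
    ((fun h : ℝ => f h) =o[𝓝 0] fun h : ℝ => h ^ (n - 1)) ∧
    -- the n-th symmetric Riemann derivative at 0 exists and equals 0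
    Tendsto
      (fun h : ℝ =>
        (∑ i ∈ Finset.range (n + 1),
          (-1 : ℝ) ^ i * (n.choose i : ℝ) * f (((n : ℝ) / 2 - (i : ℝ)) * h)) / h ^ n)
      (𝓝[≠] 0) (𝓝 0) ∧
    -- the n-th Peano derivative at 0 does not exist
    ¬ ∃ c : ℕ → ℝ,
      (fun h : ℝ => f h - ∑ j ∈ Finset.range (n + 1), c j * h ^ j / (j.factorial : ℝ))
        =o[𝓝 0] fun h : ℝ => h ^ n := by
  open Asymptotics in
  have hlittle : (fun h : ℝ => f h) =o[𝓝 0] fun h : ℝ => h ^ (n - 1) := by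
      have hn3 : (3:ℝ) ≤ (n:ℝ) := by exact_mod_cast hn
      have habs : ∀ x : ℝ, |f x| = |x| ^ ((n : ℝ) - 1/2) := by
        intro x
        rcases le_or_gt 0 x with hx | hx
        · rw [hf x, if_pos hx, abs_of_nonneg (Real.rpow_nonneg hx _), abs_of_nonneg hx]
        · rw [hf x, if_neg (not_le.mpr hx), abs_mul, abs_pow, abs_neg, abs_one, one_pow, one_mul,
            abs_of_nonneg (Real.rpow_nonneg (by linarith) _), abs_of_neg hx]
      rw [isLittleO_iff]
      intro ε hε
      have hev : ∀ᶠ h : ℝ in 𝓝 0, |h - 0| < ε^2 := eventually_abs_sub_lt 0 (by positivity)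
      filter_upwards [hev] with h hh
      rw [sub_zero] at hh
      rw [Real.norm_eq_abs, Real.norm_eq_abs, habs h, abs_pow]
      rcases eq_or_ne h 0 with rfl | hne
      · rw [abs_zero, Real.zero_rpow (by norm_num; linarith), zero_pow (by omega)]
        simp
      · have hpos : 0 < |h| := abs_pos.mpr hne
        have hsplit : |h| ^ ((n : ℝ) - 1/2) = |h| ^ (n-1 : ℕ) * |h| ^ ((1:ℝ)/2) := by
          rw [← Real.rpow_natCast |h| (n-1), ← Real.rpow_add hpos]
          congr 1
          have : ((n - 1 : ℕ) : ℝ) = (n : ℝ) - 1 := by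
            rw [Nat.cast_sub (by omega)]; norm_num
          rw [this]; ring
        rw [hsplit]
        have hle : |h| ^ ((1:ℝ)/2) ≤ ε := by
          calc |h| ^ ((1:ℝ)/2) ≤ (ε^2) ^ ((1:ℝ)/2) :=
                Real.rpow_le_rpow (abs_nonneg h) hh.le (by norm_num)
            _ = ε := by
                rw [← Real.rpow_natCast ε 2, ← Real.rpow_mul hε.le]
                norm_num
        calc |h| ^ (n-1:ℕ) * |h| ^ ((1:ℝ)/2) ≤ |h| ^ (n-1:ℕ) * ε := by
              apply mul_le_mul_of_nonneg_left hle (by positivity)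
          _ = ε * |h| ^ (n-1:ℕ) := by ring
  refine ⟨hlittle, ?_, ?_⟩
  ·
      have hn3 : (3:ℝ) ≤ (n:ℝ) := by exact_mod_cast hn
      have hexp : (n:ℝ) - 1/2 ≠ 0 := by norm_num; linarith
      have hf0 : f 0 = 0 := by rw [hf 0, if_pos le_rfl, Real.zero_rpow hexp]
      have hodd : ∀ x : ℝ, f (-x) = (-1:ℝ)^(n-1) * f x := by
        intro x
        have hsq : ((-1:ℝ)^(n-1)) * ((-1:ℝ)^(n-1)) = 1 := by
          rw [← pow_add]; exact Even.neg_one_pow ⟨n-1, rfl⟩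
        rcases lt_trichotomy x 0 with hx | rfl | hx
        · rw [hf (-x), if_pos (by linarith), hf x, if_neg (not_le.mpr hx)]
          calc (-x) ^ ((n:ℝ) - 1/2)
              = (((-1:ℝ)^(n-1)) * ((-1:ℝ)^(n-1))) * (-x) ^ ((n:ℝ) - 1/2) := by rw [hsq, one_mul]
            _ = (-1:ℝ)^(n-1) * ((-1:ℝ)^(n-1) * (-x) ^ ((n:ℝ) - 1/2)) := by ring
        · simp [hf0]
        · rw [hf (-x), if_neg (by simp; linarith), neg_neg, hf x, if_pos hx.le]
      have hS : ∀ t : ℝ,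
          (∑ i ∈ Finset.range (n + 1),
            (-1 : ℝ) ^ i * (n.choose i : ℝ) * f (((n : ℝ) / 2 - (i : ℝ)) * t)) = 0 := by
        intro t
        set g : ℕ → ℝ := fun i => (-1 : ℝ) ^ i * (n.choose i : ℝ) * f (((n : ℝ) / 2 - (i : ℝ)) * t)
          with hg
        have hpair : ∀ j ≤ n, g (n - j) = - g j := by
          intro j hj
          have hcast : ((n - j : ℕ) : ℝ) = (n:ℝ) - (j:ℝ) := by
            rw [Nat.cast_sub hj]
          have harg : ((n : ℝ) / 2 - ((n - j : ℕ) : ℝ)) * t = -(((n : ℝ) / 2 - (j:ℝ)) * t) := by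
            rw [hcast]; ring
          have hsign : ((-1:ℝ)) ^ (n - j) * (-1:ℝ)^(n-1) = -(-1:ℝ)^j := by
            have hmod : ((n - j) + (n - 1)) % 2 = (j + 1) % 2 := by omega
            rw [← pow_add, neg_one_pow_eq_pow_mod_two, hmod, ← neg_one_pow_eq_pow_mod_two, pow_succ]
            ring
          simp only [hg]
          rw [harg, hodd, Nat.choose_symm hj]
          calc (-1:ℝ) ^ (n - j) * (n.choose j : ℝ) * ((-1:ℝ)^(n-1) * f (((n : ℝ) / 2 - (j:ℝ)) * t))
              = ((-1:ℝ) ^ (n - j) * (-1:ℝ)^(n-1)) * ((n.choose j : ℝ) * f (((n : ℝ) / 2 - (j:ℝ)) * t)) := by ring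
            _ = (-(-1:ℝ)^j) * ((n.choose j : ℝ) * f (((n : ℝ) / 2 - (j:ℝ)) * t)) := by rw [hsign]
            _ = -((-1:ℝ)^j * (n.choose j : ℝ) * f (((n : ℝ) / 2 - (j:ℝ)) * t)) := by ring
        have h1 : ∑ j ∈ Finset.range (n+1), g (n - j) = ∑ j ∈ Finset.range (n+1), g j := by
          have := Finset.sum_range_reflect g (n+1)
          simpa using this
        have h2 : ∑ j ∈ Finset.range (n+1), g (n - j) = -∑ j ∈ Finset.range (n+1), g j := by
          rw [← Finset.sum_neg_distrib]
          exact Finset.sum_congr rfl fun j hj => hpair j (by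
            simpa using Nat.lt_succ_iff.mp (Finset.mem_range.mp hj))
        have : ∑ j ∈ Finset.range (n+1), g j = 0 := by
          have := h1.symm.trans h2
          linarith
        exact this
      have : (fun h : ℝ =>
          (∑ i ∈ Finset.range (n + 1),
            (-1 : ℝ) ^ i * (n.choose i : ℝ) * f (((n : ℝ) / 2 - (i : ℝ)) * h)) / h ^ n)
          = fun _ : ℝ => (0:ℝ) := by
        funext h; rw [hS h, zero_div]
      rw [this]
      exact tendsto_const_nhds
  ·
      rintro ⟨c, hc⟩
      have hn1 : n - 1 + 1 = n := by omega
      -- h^n = o(h^(n-1)) on the punctured filter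
      have hpow : (fun h : ℝ => h ^ n) =o[𝓝[≠] (0:ℝ)] fun h : ℝ => h ^ (n-1) := by
        rw [isLittleO_iff]
        intro ε hε
        have hev : ∀ᶠ h : ℝ in 𝓝 0, |h - 0| < ε := eventually_abs_sub_lt 0 hε
        filter_upwards [hev.filter_mono nhdsWithin_le_nhds] with h hh
        rw [sub_zero] at hh
        rw [Real.norm_eq_abs, Real.norm_eq_abs, abs_pow, abs_pow, ← hn1, pow_succ]
        calc |h| ^ (n - 1) * |h| ≤ |h| ^ (n - 1) * ε :=
              mul_le_mul_of_nonneg_left hh.le (by positivity)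
          _ = ε * |h| ^ (n - 1) := by ring
      have hE : (fun h : ℝ => f h - ∑ j ∈ Finset.range (n + 1), c j * h ^ j / (j.factorial : ℝ))
          =o[𝓝[≠] (0:ℝ)] fun h : ℝ => h ^ n := hc.mono nhdsWithin_le_nhds
      have hp : (fun h : ℝ => ∑ j ∈ Finset.range (n + 1), c j * h ^ j / (j.factorial : ℝ))
          =o[𝓝[≠] (0:ℝ)] fun h : ℝ => h ^ (n-1) := by
        have := (hlittle.mono nhdsWithin_le_nhds).sub (hE.trans hpow)
        simpa using this
      have hq : (fun h : ℝ => ∑ j ∈ Finset.range (n-1+1), (c j / (j.factorial : ℝ)) * h ^ j)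
          =o[𝓝[≠] (0:ℝ)] fun h : ℝ => h ^ (n-1) := by
        have h2 : (fun h : ℝ => (c n / (n.factorial : ℝ)) * h ^ n) =o[𝓝[≠] (0:ℝ)]
            fun h : ℝ => h ^ (n-1) := hpow.const_mul_left _
        have h3 := hp.sub h2
        refine h3.congr_left fun h => ?_
        rw [hn1, Finset.sum_range_succ]
        have : ∀ j, c j * h ^ j / (j.factorial : ℝ) = c j / (j.factorial : ℝ) * h ^ j :=
          fun j => mul_div_right_comm _ _ _
        simp only [this]
        ring
      have hzero : ∀ j < n, c j = 0 := by
        intro j hj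
        have := aux_poly_isLittleO (n-1) (fun j => c j / (j.factorial : ℝ)) hq j (by omega)
        field_simp at this
        simpa using this
      -- so the remainder is f h - c n * h^n / n!
      have hE2 : ∀ h : ℝ, (∑ j ∈ Finset.range (n + 1), c j * h ^ j / (j.factorial : ℝ))
          = c n * h ^ n / (n.factorial : ℝ) := by
        intro h
        rw [Finset.sum_range_succ]
        have : ∑ j ∈ Finset.range n, c j * h ^ j / (j.factorial : ℝ) = 0 := by
          apply Finset.sum_eq_zero
          intro j hj
          rw [hzero j (Finset.mem_range.mp hj), zero_mul, zero_div]
        rw [this, zero_add]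
      -- Tendsto (f h / h^n) (𝓝[>] 0) (𝓝 (c n / n!))
      have htend : Tendsto (fun h : ℝ => f h / h ^ n) (𝓝[>] (0:ℝ))
          (𝓝 (c n / (n.factorial : ℝ))) := by
        have h1 := hc.tendsto_div_nhds_zero.mono_left
          (nhdsWithin_le_nhds (s := Set.Ioi (0:ℝ)))
        have h2 : Tendsto (fun h : ℝ => f h / h ^ n - c n / (n.factorial : ℝ)) (𝓝[>] (0:ℝ))
            (𝓝 0) := by
          apply h1.congr'
          filter_upwards [self_mem_nhdsWithin] with h hh
          have hhpos : (0:ℝ) < h := hh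
          have hne : h ^ n ≠ 0 := by positivity
          rw [hE2 h]
          field_simp
        have := h2.add_const (c n / (n.factorial : ℝ))
        simpa using this
      -- but f h / h^n → ∞ on the right
      have hatop : Tendsto (fun h : ℝ => f h / h ^ n) (𝓝[>] (0:ℝ)) atTop := by
        have hsqrt : Tendsto (fun h : ℝ => Real.sqrt h) (𝓝[>] (0:ℝ)) (𝓝[>] (0:ℝ)) := by
          rw [tendsto_nhdsWithin_iff]
          constructor
          · have := (Real.continuous_sqrt.tendsto 0).mono_left
              (nhdsWithin_le_nhds (s := Set.Ioi (0:ℝ)))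
            simpa using this
          · filter_upwards [self_mem_nhdsWithin] with h hh
            exact Real.sqrt_pos.mpr hh
        have hinv := hsqrt.inv_tendsto_nhdsGT_zero
        apply hinv.congr'
        filter_upwards [self_mem_nhdsWithin] with h hh
        have hhpos : (0:ℝ) < h := hh
        have hfh : f h = h ^ ((n:ℝ) - 1/2) := by rw [hf h, if_pos hhpos.le]
        rw [Pi.inv_apply, hfh, ← Real.rpow_natCast h n, ← Real.rpow_sub hhpos]
        have : (n:ℝ) - 1/2 - (n:ℝ) = -(1/2) := by ring
        rw [this, Real.rpow_neg hhpos.le, Real.sqrt_eq_rpow]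
      exact not_tendsto_atTop_of_tendsto_nhds htend hatop
end

section
/- Let G = {2^m 3^n : m, n ∈ ℤ} be the multiplicative subgroup of positive rationals generated by 2 and 3, and define f: ℝ → ℝ by f(x) = (-1)^{m+n} x^3 if x = 2^m 3^n ∈ G and f(x) = 0 otherwise. Then f has second Peano derivative 0 at 0 (indeed f(h) = o(h^2)), the third forward Riemann derivative D_3 f(0) = lim_{h→0} (f(3h) - 3f(2h) + 3f(h) - f(0))/h^3 exists and equals 0, but the third Peano derivative of f at 0 does not exist. -/
open Filter Topology

open Asymptotics

private lemma abs_neg_one_zpow' (k : ℤ) : |(-1:ℝ) ^ k| = 1 := by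
  have h : ((-1:ℝ) ^ k) ^ 2 = 1 := by
    rw [← zpow_natCast ((-1:ℝ) ^ k) 2, ← zpow_mul,
      show k * ((2:ℕ):ℤ) = 2 * k by push_cast; ring, zpow_mul]
    norm_num
  have h2 : |(-1:ℝ) ^ k| ^ 2 = 1 := by rw [sq_abs]; exact h
  nlinarith [abs_nonneg ((-1:ℝ) ^ k)]

private lemma cancel_mul {a b : ℝ → ℝ}
    (h : (fun x => x * a x) =o[𝓝[≠] (0:ℝ)] (fun x => x * b x)) :
    a =o[𝓝[≠] (0:ℝ)] b := by
  rw [isLittleO_iff] at h ⊢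
  intro ε hε
  filter_upwards [h hε, self_mem_nhdsWithin] with x hx hx0
  rw [norm_mul, norm_mul] at hx
  have hx0' : x ≠ 0 := hx0
  have hxpos : 0 < ‖x‖ := by simpa [norm_pos_iff] using hx0'
  nlinarith [norm_nonneg (b x), norm_nonneg (a x)]


theorem forward_riemann_does_not_imply_peano_n3
    (f : ℝ → ℝ)
    (hfG : ∀ m n : ℤ, f ((2 : ℝ) ^ m * (3 : ℝ) ^ n) =
      (-1 : ℝ) ^ (m + n) * ((2 : ℝ) ^ m * (3 : ℝ) ^ n) ^ 3)
    (hf0 : ∀ x : ℝ, (¬ ∃ m n : ℤ, x = (2 : ℝ) ^ m * (3 : ℝ) ^ n) → f x = 0) :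
    -- second Peano derivative 0 at 0: f(h) = o(h²)
    ((fun h : ℝ => f h) =o[𝓝 0] fun h : ℝ => h ^ 2) ∧
    -- third forward Riemann derivative at 0 exists and equals 0
    Tendsto (fun h : ℝ => (f (3 * h) - 3 * f (2 * h) + 3 * f h - f 0) / h ^ 3)
      (𝓝[≠] 0) (𝓝 0) ∧
    -- third Peano derivative at 0 does not exist
    ¬ ∃ c₀ c₁ c₂ c₃ : ℝ,
      (fun h : ℝ => f h - (c₀ + c₁ * h + c₂ * h ^ 2 / 2 + c₃ * h ^ 3 / 6))
        =o[𝓝 0] fun h : ℝ => h ^ 3 := by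
  have two_ne : (2:ℝ) ≠ 0 := by norm_num
  have three_ne : (3:ℝ) ≠ 0 := by norm_num
  have neg_ne : (-1:ℝ) ≠ 0 := by norm_num
  -- bound
  have hb : ∀ x : ℝ, |f x| ≤ |x| ^ 3 := by
    intro x
    by_cases hx : ∃ m n : ℤ, x = (2:ℝ) ^ m * (3:ℝ) ^ n
    · obtain ⟨m, n, rfl⟩ := hx
      rw [hfG, abs_mul, abs_pow, abs_neg_one_zpow', one_mul]
    · rw [hf0 x hx]
      simp only [abs_zero]
      positivity
  have hf00 : f 0 = 0 := by
    apply hf0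
    rintro ⟨m, n, h⟩
    have : (0:ℝ) < (2:ℝ) ^ m * (3:ℝ) ^ n := by positivity
    linarith
  -- f = O(h^3)
  have hO3 : (fun h : ℝ => f h) =O[𝓝 0] fun h : ℝ => h ^ 3 := by
    apply IsBigO.of_bound 1
    filter_upwards with x
    simpa [Real.norm_eq_abs, abs_pow] using hb x
  -- h^3 = o(h^2) at 0
  have ho32 : (fun h : ℝ => h ^ 3) =o[𝓝 (0:ℝ)] fun h : ℝ => h ^ 2 := by
    have h1 : (fun h : ℝ => h) =o[𝓝 (0:ℝ)] (fun _ => (1:ℝ)) :=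
      (isLittleO_one_iff ℝ).mpr tendsto_id
    have := h1.mul_isBigO (isBigO_refl (fun h : ℝ => h ^ 2) (𝓝 0))
    exact this.congr (fun x => by ring) (fun x => by ring)
  have part1 : (fun h : ℝ => f h) =o[𝓝 0] fun h : ℝ => h ^ 2 :=
    hO3.trans_isLittleO ho32
  refine ⟨part1, ?_, ?_⟩
  · -- Riemann derivative: numerator is identically zero
    have key : ∀ h : ℝ, f (3 * h) - 3 * f (2 * h) + 3 * f h - f 0 = 0 := by
      intro h
      by_cases hG : ∃ m n : ℤ, h = (2:ℝ) ^ m * (3:ℝ) ^ n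
      · obtain ⟨m, n, rfl⟩ := hG
        have e3 : (3:ℝ) * ((2:ℝ) ^ m * (3:ℝ) ^ n) = (2:ℝ) ^ m * (3:ℝ) ^ (n + 1) := by
          rw [zpow_add₀ three_ne]; ring
        have e2 : (2:ℝ) * ((2:ℝ) ^ m * (3:ℝ) ^ n) = (2:ℝ) ^ (m + 1) * (3:ℝ) ^ n := by
          rw [zpow_add₀ two_ne]; ring
        rw [e3, e2, hfG, hfG, hfG, hf00]
        have s1 : m + (n + 1) = (m + n) + 1 := by ring
        have s2 : (m + 1) + n = (m + n) + 1 := by ring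
        rw [s1, s2, zpow_add₀ neg_ne, zpow_add₀ three_ne, zpow_add₀ two_ne]
        ring
      · have h1 : f ((3:ℝ) * h) = 0 := by
          apply hf0
          rintro ⟨m, n, heq⟩
          exact hG ⟨m, n - 1, by
            have : h = ((2:ℝ) ^ m * (3:ℝ) ^ n) / 3 := by
              linarith [heq]
            rw [this, zpow_sub₀ three_ne]; field_simp⟩
        have h2 : f ((2:ℝ) * h) = 0 := by
          apply hf0
          rintro ⟨m, n, heq⟩
          exact hG ⟨m - 1, n, by
            have : h = ((2:ℝ) ^ m * (3:ℝ) ^ n) / 2 := by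
              linarith [heq]
            rw [this, zpow_sub₀ two_ne]; field_simp⟩
        have h3 : f h = 0 := hf0 h hG
        rw [h1, h2, h3, hf00]; ring
    have : (fun h : ℝ => (f (3 * h) - 3 * f (2 * h) + 3 * f h - f 0) / h ^ 3)
        = fun _ : ℝ => (0:ℝ) := by
      funext h; rw [key h, zero_div]
    rw [this]
    exact tendsto_const_nhds
  · -- no third Peano derivative
    rintro ⟨c₀, c₁, c₂, c₃, hlt⟩
    set P : ℝ → ℝ := fun h => c₀ + c₁ * h + c₂ * h ^ 2 / 2 + c₃ * h ^ 3 / 6 with hP_def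
    -- f tends to 0
    have hftends : Tendsto f (𝓝 0) (𝓝 0) := by
      apply hO3.trans_tendsto
      have : Tendsto (fun h : ℝ => h) (𝓝 0) (𝓝 0) := tendsto_id
      simpa using this.pow 3
    -- g tends to 0
    have hgtends : Tendsto (fun h : ℝ => f h - P h) (𝓝 0) (𝓝 0) := by
      apply hlt.isBigO.trans_tendsto
      have : Tendsto (fun h : ℝ => h) (𝓝 0) (𝓝 0) := tendsto_id
      simpa using this.pow 3
    -- P tends to 0 and to c₀
    have hPtends0 : Tendsto P (𝓝 0) (𝓝 0) := by
      have := hftends.sub hgtends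
      simpa using this
    have hPtendsc : Tendsto P (𝓝 (0:ℝ)) (𝓝 c₀) := by
      have : ContinuousAt P 0 := by fun_prop
      simpa [hP_def, ContinuousAt] using this
    have hc0 : c₀ = 0 := tendsto_nhds_unique hPtendsc hPtends0
    -- P = o(h^2)
    have hg2 : (fun h : ℝ => f h - P h) =o[𝓝 (0:ℝ)] fun h : ℝ => h ^ 2 :=
      hlt.trans ho32
    have hP2 : P =o[𝓝 (0:ℝ)] fun h : ℝ => h ^ 2 := by
      have := part1.sub hg2
      simpa using this
    have hP2' : P =o[𝓝[≠] (0:ℝ)] fun h : ℝ => h ^ 2 := hP2.mono nhdsWithin_le_nhds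
    -- cancel once
    set Q : ℝ → ℝ := fun h => c₁ + c₂ * h / 2 + c₃ * h ^ 2 / 6 with hQ_def
    have hQ : Q =o[𝓝[≠] (0:ℝ)] fun h : ℝ => h := by
      apply cancel_mul
      exact hP2'.congr (fun x => by simp [hP_def, hQ_def, hc0]; ring) (fun x => by ring)
    have hidt : Tendsto (fun h : ℝ => h) (𝓝[≠] (0:ℝ)) (𝓝 0) :=
      tendsto_id.mono_left nhdsWithin_le_nhds
    have hQ0 : Tendsto Q (𝓝[≠] (0:ℝ)) (𝓝 0) := hQ.isBigO.trans_tendsto hidt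
    have hQc : Tendsto Q (𝓝[≠] (0:ℝ)) (𝓝 c₁) := by
      have : ContinuousAt Q 0 := by fun_prop
      have h2 := this.tendsto
      have : Q 0 = c₁ := by simp [hQ_def]
      rw [this] at h2
      exact h2.mono_left nhdsWithin_le_nhds
    have hc1 : c₁ = 0 := tendsto_nhds_unique hQc hQ0
    -- cancel twice
    set R : ℝ → ℝ := fun h => c₂ / 2 + c₃ * h / 6 with hR_def
    have hR : R =o[𝓝[≠] (0:ℝ)] (fun _ : ℝ => (1:ℝ)) := by
      apply cancel_mul
      exact hQ.congr (fun x => by simp [hQ_def, hR_def, hc1]; ring) (fun x => by ring)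
    have hR0 : Tendsto R (𝓝[≠] (0:ℝ)) (𝓝 0) := (isLittleO_one_iff ℝ).mp hR
    have hRc : Tendsto R (𝓝[≠] (0:ℝ)) (𝓝 (c₂ / 2)) := by
      have : ContinuousAt R 0 := by fun_prop
      have h2 := this.tendsto
      have : R 0 = c₂ / 2 := by simp [hR_def]
      rw [this] at h2
      exact h2.mono_left nhdsWithin_le_nhds
    have hc2 : c₂ = 0 := by
      have := tendsto_nhds_unique hRc hR0
      linarith
    -- now g h = f h - c₃ h³/6 and g/h³ → 0
    have hdiv : Tendsto (fun h : ℝ => (f h - P h) / h ^ 3) (𝓝 0) (𝓝 0) :=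
      hlt.tendsto_div_nhds_zero
    -- sequence a k = 2^(-2k)
    have hquarter : Tendsto (fun k : ℕ => ((4:ℝ)⁻¹) ^ k) atTop (𝓝 0) :=
      tendsto_pow_atTop_nhds_zero_of_lt_one (by norm_num) (by norm_num)
    have pow_eq : ∀ k : ℕ, ((4:ℝ)⁻¹) ^ k = (2:ℝ) ^ (-(2 * (k:ℤ))) := by
      intro k
      rw [← zpow_natCast ((4:ℝ)⁻¹) k]
      rw [show ((4:ℝ)⁻¹) = (2:ℝ) ^ (-2:ℤ) by norm_num]
      rw [← zpow_mul]
      ring_nf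
    -- value of f on powers of two
    have hfval : ∀ m : ℤ, f ((2:ℝ) ^ m) = (-1:ℝ) ^ m * ((2:ℝ) ^ m) ^ 3 := by
      intro m
      have := hfG m 0
      simpa using this
    -- limit along a k = 2^(-2k):  1 - c₃/6 = 0
    have limA : Tendsto (fun k : ℕ => (f ((2:ℝ) ^ (-(2 * (k:ℤ)))) - P ((2:ℝ) ^ (-(2 * (k:ℤ))))) / ((2:ℝ) ^ (-(2 * (k:ℤ)))) ^ 3) atTop (𝓝 0) := by
      apply hdiv.comp
      have := hquarter
      simp only [pow_eq] at this
      exact this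
    have valA : ∀ k : ℕ, (f ((2:ℝ) ^ (-(2 * (k:ℤ)))) - P ((2:ℝ) ^ (-(2 * (k:ℤ))))) / ((2:ℝ) ^ (-(2 * (k:ℤ)))) ^ 3 = 1 - c₃ / 6 := by
      intro k
      set x : ℝ := (2:ℝ) ^ (-(2 * (k:ℤ))) with hx
      have hxne : x ≠ 0 := by positivity
      have hsign : (-1:ℝ) ^ (-(2 * (k:ℤ))) = 1 := by
        rw [show -(2 * (k:ℤ)) = 2 * (-(k:ℤ)) by ring, zpow_mul]
        norm_num
      have : f x = x ^ 3 := by rw [hx, hfval, hsign, one_mul]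
      rw [this, hP_def]
      simp only [hc0, hc1, hc2]
      field_simp
      ring
    have eqA : (1:ℝ) - c₃ / 6 = 0 := by
      have : Tendsto (fun _ : ℕ => (1:ℝ) - c₃ / 6) atTop (𝓝 0) := by
        have := limA
        simp only [valA] at this
        exact this
      exact tendsto_nhds_unique tendsto_const_nhds this
    -- sequence b k = 2^(-(2k+1)):  -1 - c₃/6 = 0
    have hhalfq : Tendsto (fun k : ℕ => (2:ℝ)⁻¹ * ((4:ℝ)⁻¹) ^ k) atTop (𝓝 0) := by
      have := hquarter.const_mul ((2:ℝ)⁻¹)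
      simpa using this
    have pow_eq' : ∀ k : ℕ, (2:ℝ)⁻¹ * ((4:ℝ)⁻¹) ^ k = (2:ℝ) ^ (-(2 * (k:ℤ) + 1)) := by
      intro k
      rw [pow_eq k, show -(2 * (k:ℤ) + 1) = (-1) + (-(2 * (k:ℤ))) by ring, zpow_add₀ two_ne]
      norm_num
    have limB : Tendsto (fun k : ℕ => (f ((2:ℝ) ^ (-(2 * (k:ℤ) + 1))) - P ((2:ℝ) ^ (-(2 * (k:ℤ) + 1)))) / ((2:ℝ) ^ (-(2 * (k:ℤ) + 1))) ^ 3) atTop (𝓝 0) := by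
      apply hdiv.comp
      have := hhalfq
      simp only [pow_eq'] at this
      exact this
    have valB : ∀ k : ℕ, (f ((2:ℝ) ^ (-(2 * (k:ℤ) + 1))) - P ((2:ℝ) ^ (-(2 * (k:ℤ) + 1)))) / ((2:ℝ) ^ (-(2 * (k:ℤ) + 1))) ^ 3 = -1 - c₃ / 6 := by
      intro k
      set x : ℝ := (2:ℝ) ^ (-(2 * (k:ℤ) + 1)) with hx
      have hxne : x ≠ 0 := by positivity
      have hsign : (-1:ℝ) ^ (-(2 * (k:ℤ) + 1)) = -1 := by
        rw [show -(2 * (k:ℤ) + 1) = 2 * (-(k:ℤ) - 1) + 1 by ring, zpow_add₀ neg_ne, zpow_mul]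
        norm_num
      have : f x = -(x ^ 3) := by rw [hx, hfval, hsign]; ring
      rw [this, hP_def]
      simp only [hc0, hc1, hc2]
      field_simp
      ring
    have eqB : (-1:ℝ) - c₃ / 6 = 0 := by
      have : Tendsto (fun _ : ℕ => (-1:ℝ) - c₃ / 6) atTop (𝓝 0) := by
        have := limB
        simp only [valB] at this
        exact this
      exact tendsto_nhds_unique tendsto_const_nhds this
    linarith
end

section
/- For the function f of the previous example (f(x) = (-1)^{m+n} x^3 for x = 2^m 3^n in the group generated by 2 and 3, and 0 otherwise): the ratio f(h)/h^3 has at least the three distinct limit points 0, 1, and -1 as h → 0⁺, hence lim_{h→0} f(h)/h^3 does not exist. -/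
open Filter Topology

private lemma seq1 (k : ℕ) : ((1:ℝ)/4)^k = (2:ℝ)^(-(2*(k:ℤ))) * (3:ℝ)^((0:ℤ)) := by
  rw [zpow_zero, mul_one, show -(2*(k:ℤ)) = (-2)*k by ring, zpow_mul, zpow_natCast]
  norm_num

private lemma seq2 (k : ℕ) : 2*((1:ℝ)/4)^k = (2:ℝ)^(1-(2*(k:ℤ))) * (3:ℝ)^((0:ℤ)) := by
  rw [zpow_zero, mul_one, show (1:ℤ)-(2*(k:ℤ)) = 1 + (-2)*k by ring, zpow_add₀ (by norm_num : (2:ℝ) ≠ 0), zpow_mul, zpow_natCast]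
  norm_num

theorem three_limit_points
    (f : ℝ → ℝ)
    (hfG : ∀ m n : ℤ, f ((2 : ℝ) ^ m * (3 : ℝ) ^ n) =
      (-1 : ℝ) ^ (m + n) * ((2 : ℝ) ^ m * (3 : ℝ) ^ n) ^ 3)
    (hf0 : ∀ x : ℝ, (¬ ∃ m n : ℤ, x = (2 : ℝ) ^ m * (3 : ℝ) ^ n) → f x = 0) :
    (∀ L ∈ ({0, 1, -1} : Set ℝ),
      ∃ h : ℕ → ℝ, (∀ k, 0 < h k) ∧ Tendsto h atTop (𝓝 0) ∧
        Tendsto (fun k => f (h k) / (h k) ^ 3) atTop (𝓝 L)) ∧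
    ¬ ∃ L : ℝ, Tendsto (fun h : ℝ => f h / h ^ 3) (𝓝[≠] 0) (𝓝 L) := by
  have hq : Tendsto (fun k : ℕ => ((1:ℝ)/4)^k) atTop (𝓝 0) :=
    tendsto_pow_atTop_nhds_zero_of_lt_one (by norm_num) (by norm_num)
  have hqpos : ∀ k : ℕ, (0:ℝ) < ((1:ℝ)/4)^k := fun k => pow_pos (by norm_num) k
  -- sequence for L = 0
  have h0 : ∃ h : ℕ → ℝ, (∀ k, 0 < h k) ∧ Tendsto h atTop (𝓝 0) ∧
      Tendsto (fun k => f (h k) / (h k) ^ 3) atTop (𝓝 0) := by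
    refine ⟨fun k => Real.sqrt 2 / ((k:ℝ)+1), fun k => by positivity, ?_, ?_⟩
    · have : Tendsto (fun k : ℕ => Real.sqrt 2 / ((k+1 : ℕ) : ℝ)) atTop (𝓝 0) :=
        (tendsto_const_div_atTop_nhds_zero_nat (Real.sqrt 2)).comp (tendsto_add_atTop_nat 1)
      simpa [Nat.cast_add] using this
    · have hz : ∀ k : ℕ, f (Real.sqrt 2 / ((k:ℝ)+1)) = 0 := by
        intro k
        apply hf0
        rintro ⟨m, n, hmn⟩
        have hirr : Irrational (Real.sqrt 2 / ((k:ℝ)+1)) := by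
          have : ((k:ℝ)+1) = ((k+1 : ℕ) : ℝ) := by push_cast; ring
          rw [this]
          exact irrational_sqrt_two.div_natCast (by omega)
        have : ((2:ℝ)^m * 3^n) = (((2:ℚ)^m * 3^n : ℚ) : ℝ) := by push_cast; ring
        rw [hmn, this] at hirr
        exact hirr ⟨_, rfl⟩
      simp only [hz, zero_div]; exact tendsto_const_nhds
  -- sequence for L = 1
  have h1 : ∃ h : ℕ → ℝ, (∀ k, 0 < h k) ∧ Tendsto h atTop (𝓝 0) ∧
      Tendsto (fun k => f (h k) / (h k) ^ 3) atTop (𝓝 1) := by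
    refine ⟨fun k => ((1:ℝ)/4)^k, hqpos, hq, ?_⟩
    have hr : ∀ k : ℕ, f (((1:ℝ)/4)^k) / (((1:ℝ)/4)^k) ^ 3 = 1 := by
      intro k
      rw [seq1 k, hfG]
      have he : Even (-(2*(k:ℤ)) + 0) := ⟨-(k:ℤ), by ring⟩
      rw [he.neg_one_zpow, one_mul]
      have : ((2:ℝ)^(-(2*(k:ℤ))) * (3:ℝ)^((0:ℤ))) ^ 3 ≠ 0 := by positivity
      field_simp
    simp only [hr]; exact tendsto_const_nhds
  -- sequence for L = -1
  have hm1 : ∃ h : ℕ → ℝ, (∀ k, 0 < h k) ∧ Tendsto h atTop (𝓝 0) ∧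
      Tendsto (fun k => f (h k) / (h k) ^ 3) atTop (𝓝 (-1)) := by
    refine ⟨fun k => 2*((1:ℝ)/4)^k, fun k => by positivity, ?_, ?_⟩
    · simpa using hq.const_mul (2:ℝ)
    · have hr : ∀ k : ℕ, f (2*((1:ℝ)/4)^k) / (2*((1:ℝ)/4)^k) ^ 3 = -1 := by
        intro k
        rw [seq2 k, hfG]
        have he : Odd (1 - (2*(k:ℤ)) + 0) := ⟨-(k:ℤ), by ring⟩
        rw [he.neg_one_zpow]
        have : ((2:ℝ)^(1-(2*(k:ℤ))) * (3:ℝ)^((0:ℤ))) ^ 3 ≠ 0 := by positivity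
        field_simp
      simp only [hr]; exact tendsto_const_nhds
  constructor
  · intro L hL
    rcases hL with h | h | h <;> subst h
    · exact h0
    · exact h1
    · exact hm1
  · rintro ⟨L, hLten⟩
    obtain ⟨a, hapos, haten, haratio⟩ := h1
    obtain ⟨b, hbpos, hbten, hbratio⟩ := hm1
    have ha' : Tendsto a atTop (𝓝[≠] 0) :=
      tendsto_nhdsWithin_of_tendsto_nhds_of_eventually_within a haten
        (Eventually.of_forall fun k => (hapos k).ne')
    have hb' : Tendsto b atTop (𝓝[≠] 0) :=
      tendsto_nhdsWithin_of_tendsto_nhds_of_eventually_within b hbten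
        (Eventually.of_forall fun k => (hbpos k).ne')
    have hL1 : L = 1 := tendsto_nhds_unique (hLten.comp ha') haratio
    have hL2 : L = -1 := tendsto_nhds_unique (hLten.comp hb') hbratio
    norm_num [hL1] at hL2
end

section
/- Let n ≥ 2 and let 𝒮 be the smallest collection of finite sets of non-negative integers (each of size n+1) such that: (i) the sets {j, j+1, ..., j+n} for j = 0, 1, ..., n-2 belong to 𝒮; (ii) if S ∈ 𝒮 then 2S = {2s : s ∈ S} ∈ 𝒮; (iii) if S, T ∈ 𝒮 with |S ∩ T| = n, then for every a ∈ S ∩ T the set (S ∪ T) \ {a} ∈ 𝒮. Then {0, 1, 2, 4, 8, ..., 2^{n-1}} ∈ 𝒮. -/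
/-- The collection 𝒮 of Lemma 4: generated by the consecutive-interval sets
`{j, j+1, …, j+n}` for `0 ≤ j ≤ n-2`, closed under dilation by 2 and under
elimination of a common element of two sets sharing exactly `n` elements. -/
inductive GoodSet (n : ℕ) : Finset ℕ → Prop
  | base (j : ℕ) (hj : j ≤ n - 2) : GoodSet n (Finset.Icc j (j + n))
  | dilate (S : Finset ℕ) : GoodSet n S → GoodSet n (S.image (fun s => 2 * s))
  | elim (S T : Finset ℕ) (a : ℕ) : GoodSet n S → GoodSet n T →
      (S ∩ T).card = n → a ∈ S ∩ T → GoodSet n ((S ∪ T).erase a)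

namespace CE

/-- dilation of a finset by a factor `q` -/
def dl (q : ℕ) (A : Finset ℕ) : Finset ℕ := A.image (fun x => q * x)

lemma dl_injOn (q : ℕ) (hq : 0 < q) : Function.Injective (fun x : ℕ => q * x) := by
  intro a b h
  exact Nat.eq_of_mul_eq_mul_left hq h

lemma dl_one (A : Finset ℕ) : dl 1 A = A := by simp [dl]

lemma dl_dl (q p : ℕ) (A : Finset ℕ) : dl q (dl p A) = dl (q * p) A := by
  simp only [dl, Finset.image_image]
  congr 1
  funext x
  simp [Function.comp, mul_assoc]

lemma mem_dl2_Icc {z a b : ℕ} : z ∈ dl 2 (Finset.Icc a b) ↔ 2 ∣ z ∧ 2 * a ≤ z ∧ z ≤ 2 * b := by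
  simp only [dl, Finset.mem_image, Finset.mem_Icc]
  constructor
  · rintro ⟨t, ⟨h1, h2⟩, rfl⟩
    exact ⟨⟨t, rfl⟩, by omega, by omega⟩
  · rintro ⟨⟨t, rfl⟩, h1, h2⟩
    exact ⟨t, ⟨by omega, by omega⟩, rfl⟩

lemma one_not_dl {q : ℕ} (hq : 2 ≤ q) (A : Finset ℕ) : 1 ∉ dl q A := by
  simp only [dl, Finset.mem_image]
  rintro ⟨t, _, ht⟩
  have := Nat.eq_one_of_mul_eq_one_right ht
  omega

lemma dl_insert (q w : ℕ) (A : Finset ℕ) : dl q (insert w A) = insert (q * w) (dl q A) := by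
  simp [dl, Finset.image_insert]

lemma dl_erase (q w : ℕ) (hq : 0 < q) (A : Finset ℕ) :
    dl q (A.erase w) = (dl q A).erase (q * w) := by
  exact Finset.image_erase (dl_injOn q hq) A w

lemma card_of {n : ℕ} {S : Finset ℕ} (h : GoodSet n S) : S.card = n + 1 := by
  induction h with
  | base j hj => rw [Nat.card_Icc]; omega
  | dilate S hS ih =>
      rw [Finset.card_image_of_injective _ (dl_injOn 2 (by norm_num))]
      exact ih
  | elim S T a hS hT hcard hmem ihS ihT =>
      have hmem' : a ∈ S ∪ T :=
        Finset.mem_union_left _ (Finset.mem_of_mem_inter_left hmem)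
      rw [Finset.card_erase_of_mem hmem']
      have h2 : (S ∪ T).card + (S ∩ T).card = S.card + T.card :=
        Finset.card_union_add_card_inter S T
      omega

/-- The key "single swap" elimination: if `T = S - x + y`, then we may replace any
`a ∈ S` (other than `x`) by `y`. -/
lemma gs_swap {n : ℕ} {S T : Finset ℕ} {x y a : ℕ} (hS : GoodSet n S) (hT : GoodSet n T)
    (hx : x ∈ S) (hy : y ∉ S) (hTeq : T = insert y (S.erase x))
    (ha : a ∈ S) (hax : a ≠ x) : GoodSet n (insert y (S.erase a)) := by
  have hST : S ∩ T = S.erase x := by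
    subst hTeq
    ext z
    simp only [Finset.mem_inter, Finset.mem_insert, Finset.mem_erase]
    constructor
    · rintro ⟨hzS, (rfl | ⟨hzx, _⟩)⟩
      · exact absurd hzS hy
      · exact ⟨hzx, hzS⟩
    · rintro ⟨hzx, hzS⟩
      exact ⟨hzS, Or.inr ⟨hzx, hzS⟩⟩
  have hcard : (S ∩ T).card = n := by
    rw [hST, Finset.card_erase_of_mem hx, card_of hS]; omega
  have haST : a ∈ S ∩ T := by
    rw [hST]; exact Finset.mem_erase.mpr ⟨hax, ha⟩
  have hay : a ≠ y := fun h => hy (h ▸ ha)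
  have hres : (S ∪ T).erase a = insert y (S.erase a) := by
    have hUnion : S ∪ T = insert y S := by
      subst hTeq
      ext z
      simp only [Finset.mem_union, Finset.mem_insert, Finset.mem_erase]
      constructor
      · rintro (h | (h | ⟨_, h⟩))
        · exact Or.inr h
        · exact Or.inl h
        · exact Or.inr h
      · rintro (rfl | h)
        · exact Or.inr (Or.inl rfl)
        · exact Or.inl h
    rw [hUnion]
    ext z
    simp only [Finset.mem_erase, Finset.mem_insert]
    constructor
    · rintro ⟨hza, (rfl | hz)⟩
      · exact Or.inl rfl
      · exact Or.inr ⟨hza, hz⟩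
    · rintro (rfl | ⟨hza, hz⟩)
      · exact ⟨fun h => hay h.symm, Or.inl rfl⟩
      · exact ⟨hza, Or.inr hz⟩
  have h := GoodSet.elim S T a hS hT hcard haST
  rwa [hres] at h

/-- iterated dilation -/
lemma dilE {n : ℕ} (e : ℕ) {W : Finset ℕ} (h : GoodSet n W) : GoodSet n (dl (2 ^ e) W) := by
  induction e with
  | zero => simpa [dl_one] using h
  | succ e ih =>
      have h2 : dl 2 (dl (2 ^ e) W) = dl (2 ^ (e + 1)) W := by
        rw [dl_dl]
        congr 1
        rw [pow_succ]
        ring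
      have := GoodSet.dilate _ ih
      rwa [show (dl (2 ^ e) W).image (fun s => 2 * s) = dl 2 (dl (2 ^ e) W) from rfl, h2] at this



/-- the "doubled head + consecutive tail" family: `2·Icc(c,r) ∪ Icc(2r+1, n+r+c)` -/
def WT (n c r : ℕ) : Finset ℕ := dl 2 (Finset.Icc c r) ∪ Finset.Icc (2 * r + 1) (n + r + c)

/-- `g_r = 2·Icc(0,r) ∪ Icc(2r+1, n+r-1)` -/
def gset (n r : ℕ) : Finset ℕ := dl 2 (Finset.Icc 0 r) ∪ Finset.Icc (2 * r + 1) (n + r - 1)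

/-- the main `{1}`-headed ladder set -/
def BGs (n q r : ℕ) : Finset ℕ := insert 1 (dl q (gset n r))

lemma wt {n : ℕ} (hn : 2 ≤ n) : ∀ r c, c ≤ r + 1 → c + r + 2 ≤ n → GoodSet n (WT n c r) := by
  intro r
  induction r with
  | zero =>
      intro c h1 h2
      interval_cases c
      · have he : WT n 0 0 = Finset.Icc 0 (0 + n) := by
          ext z
          simp only [WT, Finset.mem_union, Finset.mem_Icc, mem_dl2_Icc]
          omega
        exact he ▸ GoodSet.base 0 (by omega)
      · have he : WT n 1 0 = Finset.Icc 1 (1 + n) := by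
          ext z
          simp only [WT, Finset.mem_union, Finset.mem_Icc, mem_dl2_Icc]
          omega
        exact he ▸ GoodSet.base 1 (by omega)
  | succ r ih =>
      intro c h1 h2
      rcases (by omega : c = r + 2 ∨ c = r + 1 ∨ c ≤ r) with rfl | rfl | hc
      · have he : WT n (r + 2) (r + 1) = Finset.Icc (2 * r + 3) (2 * r + 3 + n) := by
          ext z
          simp only [WT, Finset.mem_union, Finset.mem_Icc, mem_dl2_Icc]
          omega
        exact he ▸ GoodSet.base (2 * r + 3) (by omega)
      · have he : WT n (r + 1) (r + 1) = Finset.Icc (2 * r + 2) (2 * r + 2 + n) := by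
          ext z
          simp only [WT, Finset.mem_union, Finset.mem_Icc, mem_dl2_Icc]
          omega
        exact he ▸ GoodSet.base (2 * r + 2) (by omega)
      · have hS := ih c (by omega) (by omega)
        have hT := ih (c + 1) (by omega) (by omega)
        have hx : 2 * c ∈ WT n c r := by
          simp only [WT, Finset.mem_union, Finset.mem_Icc, mem_dl2_Icc]
          omega
        have hy : n + r + c + 1 ∉ WT n c r := by
          simp only [WT, Finset.mem_union, Finset.mem_Icc, mem_dl2_Icc]
          omega
        have hTeq : WT n (c + 1) r = insert (n + r + c + 1) ((WT n c r).erase (2 * c)) := by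
          ext z
          simp only [WT, Finset.mem_union, Finset.mem_Icc, mem_dl2_Icc, Finset.mem_insert,
            Finset.mem_erase]
          omega
        have ha : 2 * r + 1 ∈ WT n c r := by
          simp only [WT, Finset.mem_union, Finset.mem_Icc, mem_dl2_Icc]
          omega
        have h := gs_swap hS hT hx hy hTeq ha (by omega)
        have he : insert (n + r + c + 1) ((WT n c r).erase (2 * r + 1)) = WT n c (r + 1) := by
          ext z
          simp only [WT, Finset.mem_union, Finset.mem_Icc, mem_dl2_Icc, Finset.mem_insert,
            Finset.mem_erase]
          omega
        rwa [he] at h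

lemma mul_one_aux {a b : ℕ} (h : a * b = 1) : a = 1 ∧ b = 1 := by
  have h1 : a ∣ 1 := Dvd.intro b h
  have h2 : b ∣ 1 := Dvd.intro_left a h
  have ha : a ≤ 1 := Nat.le_of_dvd one_pos h1
  have hb : b ≤ 1 := Nat.le_of_dvd one_pos h2
  interval_cases a <;> interval_cases b <;> simp_all

lemma one_not_dl_gset {n q r : ℕ} (hq : 1 ≤ q) (hqr : 2 ≤ q ∨ 1 ≤ r) :
    1 ∉ dl q (gset n r) := by
  intro hmem
  simp only [dl, Finset.mem_image] at hmem
  obtain ⟨t, ht, hqt⟩ := hmem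
  obtain ⟨hq1, ht1⟩ := mul_one_aux hqt
  subst ht1
  rcases hqr with h2q | h1r
  · omega
  · simp only [gset, Finset.mem_union, Finset.mem_Icc, mem_dl2_Icc] at ht
    omega

lemma BG_step {n q r : ℕ} (hn : 2 ≤ n) (hq : 1 ≤ q) (hqr : 2 ≤ q ∨ 1 ≤ r) (hr : r + 2 ≤ n)
    (hBG : GoodSet n (BGs n q r)) (hT : GoodSet n (dl q (WT n 0 r))) :
    GoodSet n (BGs n q (r + 1)) := by
  have h1dl : 1 ∉ dl q (gset n r) := one_not_dl_gset hq hqr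
  have id1 : WT n 0 r = insert (n + r) (gset n r) := by
    ext z
    simp only [WT, gset, Finset.mem_union, Finset.mem_Icc, mem_dl2_Icc, Finset.mem_insert]
    omega
  have mem1 : 2 * r + 1 ∈ gset n r := by
    simp only [gset, Finset.mem_union, Finset.mem_Icc, mem_dl2_Icc]
    omega
  have mem2 : n + r ∉ gset n r := by
    simp only [gset, Finset.mem_union, Finset.mem_Icc, mem_dl2_Icc]
    omega
  have id2 : insert (n + r) ((gset n r).erase (2 * r + 1)) = gset n (r + 1) := by
    ext z
    simp only [gset, Finset.mem_union, Finset.mem_Icc, mem_dl2_Icc, Finset.mem_insert,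
      Finset.mem_erase]
    omega
  have hx : 1 ∈ BGs n q r := Finset.mem_insert_self 1 _
  have hy : q * (n + r) ∉ BGs n q r := by
    simp only [BGs, Finset.mem_insert]
    rintro (h | h)
    · have := (mul_one_aux h).2; omega
    · simp only [dl, Finset.mem_image] at h
      obtain ⟨t, ht, hqt⟩ := h
      have : t = n + r := Nat.eq_of_mul_eq_mul_left (by omega) hqt
      exact mem2 (this ▸ ht)
  have hTeq : dl q (WT n 0 r) = insert (q * (n + r)) ((BGs n q r).erase 1) := by
    rw [BGs, Finset.erase_insert h1dl, id1, dl_insert]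
  have ha : q * (2 * r + 1) ∈ BGs n q r := by
    simp only [BGs, Finset.mem_insert]
    exact Or.inr (Finset.mem_image_of_mem _ mem1)
  have hax : q * (2 * r + 1) ≠ 1 := by
    intro h
    obtain ⟨h1, h2⟩ := mul_one_aux h
    rcases hqr with h' | h' <;> omega
  have h := gs_swap hBG hT hx hy hTeq ha hax
  have he : insert (q * (n + r)) ((BGs n q r).erase (q * (2 * r + 1))) = BGs n q (r + 1) := by
    rw [BGs, Finset.erase_insert_of_ne (fun h => hax h.symm), ← dl_erase _ _ (by omega),
      Finset.insert_comm, ← dl_insert, id2, BGs]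
  rwa [he] at h

lemma BG_up {n q : ℕ} (hn : 2 ≤ n) (hq : 1 ≤ q)
    (hdil : ∀ W : Finset ℕ, GoodSet n W → GoodSet n (dl q W)) (r0 : ℕ)
    (hq0 : 2 ≤ q ∨ 1 ≤ r0) (h0 : GoodSet n (BGs n q r0)) :
    ∀ r, r0 ≤ r → r ≤ n - 1 → GoodSet n (BGs n q r) := by
  intro r
  induction r with
  | zero =>
      intro h1 h2
      have : r0 = 0 := by omega
      exact this ▸ h0
  | succ r ih =>
      intro h1 h2
      rcases (by omega : r0 = r + 1 ∨ r0 ≤ r) with rfl | hle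
      · exact h0
      · have ih' := ih hle (by omega)
        have hT : GoodSet n (dl q (WT n 0 r)) := hdil _ (wt hn r 0 (by omega) (by omega))
        have hqr : 2 ≤ q ∨ 1 ≤ r := by
          rcases hq0 with h | h
          · exact Or.inl h
          · exact Or.inr (by omega)
        exact BG_step hn hq hqr (by omega) ih' hT



/-- `B(e,j) = {1} ∪ 2^e·Icc(j, j+n-1)` -/
def Bset (n e j : ℕ) : Finset ℕ := insert 1 (dl (2 ^ e) (Finset.Icc j (j + n - 1)))

lemma two_le_pow {e : ℕ} (he : 1 ≤ e) : 2 ≤ 2 ^ e := by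
  calc 2 = 2 ^ 1 := (pow_one 2).symm
  _ ≤ 2 ^ e := Nat.pow_le_pow_right (by norm_num) he

lemma b0 {n : ℕ} (hn : 2 ≤ n) : ∀ e, 1 ≤ e → GoodSet n (Bset n e 0) := by
  intro e
  induction e with
  | zero => omega
  | succ e ih =>
      intro _
      rcases Nat.eq_zero_or_pos e with rfl | he
      · -- e + 1 = 1 : anchor of the whole ladder
        have anchor : BGs n 1 1 = Finset.Icc 0 (0 + n) := by
          ext z
          simp only [BGs, gset, dl_one, Finset.mem_insert, Finset.mem_union, Finset.mem_Icc,
            mem_dl2_Icc]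
          omega
        have h1 : GoodSet n (BGs n 1 1) := anchor ▸ GoodSet.base 0 (by omega)
        have h2 : GoodSet n (BGs n 1 (n - 1)) := by
          refine BG_up hn le_rfl (fun W hW => by simpa [dl_one] using hW) 1 (Or.inr le_rfl) h1
            (n - 1) (by omega) le_rfl
        have he2 : BGs n 1 (n - 1) = Bset n 1 0 := by
          ext z
          simp only [BGs, Bset, gset, dl_one, Finset.mem_insert, Finset.mem_union, Finset.mem_Icc,
            mem_dl2_Icc, pow_one]
          omega
        exact he2 ▸ h2
      · -- step e → e+1 with q = 2^e
        have ihe := ih he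
        have anchor : BGs n (2 ^ e) 0 = Bset n e 0 := by
          have hg : gset n 0 = Finset.Icc 0 (0 + n - 1) := by
            ext z
            simp only [gset, Finset.mem_union, Finset.mem_Icc, mem_dl2_Icc]
            omega
          rw [BGs, hg, Bset]
        have h1 : GoodSet n (BGs n (2 ^ e) 0) := anchor ▸ ihe
        have h2 : GoodSet n (BGs n (2 ^ e) (n - 1)) := by
          refine BG_up hn (by have := two_le_pow he; omega) (fun W hW => dilE e hW) 0 (Or.inl (two_le_pow he)) h1
            (n - 1) (by omega) le_rfl
        have he2 : BGs n (2 ^ e) (n - 1) = Bset n (e + 1) 0 := by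
          have hg : gset n (n - 1) = dl 2 (Finset.Icc 0 (n - 1)) := by
            ext z
            simp only [gset, Finset.mem_union, Finset.mem_Icc, mem_dl2_Icc]
            omega
          rw [BGs, hg, dl_dl, Bset, show (2:ℕ) ^ e * 2 = 2 ^ (e + 1) from by rw [pow_succ],
            show (0:ℕ) + n - 1 = n - 1 from by omega]
        exact he2 ▸ h2

lemma bstep {n e j : ℕ} (hn : 2 ≤ n) (he : 1 ≤ e) (hj : j + 1 ≤ n - 1)
    (h : GoodSet n (Bset n e j)) : GoodSet n (Bset n e (j + 1)) := by
  set q := 2 ^ e with hqdef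
  have hq2 : 2 ≤ q := two_le_pow he
  have hS : GoodSet n (dl q (Finset.Icc j (j + n))) := dilE e (GoodSet.base j (by omega))
  have hx : q * (j + n) ∈ dl q (Finset.Icc j (j + n)) :=
    Finset.mem_image_of_mem _ (Finset.mem_Icc.mpr ⟨by omega, le_rfl⟩)
  have hy : (1 : ℕ) ∉ dl q (Finset.Icc j (j + n)) := one_not_dl hq2 _
  have hTeq : Bset n e j = insert 1 ((dl q (Finset.Icc j (j + n))).erase (q * (j + n))) := by
    rw [Bset, ← dl_erase _ _ (by omega)]
    congr 2
    ext z
    simp only [Finset.mem_erase, Finset.mem_Icc]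
    omega
  have ha : q * j ∈ dl q (Finset.Icc j (j + n)) :=
    Finset.mem_image_of_mem _ (Finset.mem_Icc.mpr ⟨le_rfl, by omega⟩)
  have hax : q * j ≠ q * (j + n) := by
    intro hcon
    have := Nat.eq_of_mul_eq_mul_left (show 0 < q by omega) hcon
    omega
  have hres := gs_swap hS h hx hy hTeq ha hax
  have he2 : insert 1 ((dl q (Finset.Icc j (j + n))).erase (q * j)) = Bset n e (j + 1) := by
    rw [Bset, ← dl_erase _ _ (by omega)]
    congr 2
    ext z
    simp only [Finset.mem_erase, Finset.mem_Icc]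
    omega
  rwa [he2] at hres

lemma bj {n : ℕ} (hn : 2 ≤ n) (e : ℕ) (he : 1 ≤ e) :
    ∀ j, j ≤ n - 1 → GoodSet n (Bset n e j) := by
  intro j
  induction j with
  | zero => intro _; exact b0 hn e he
  | succ j ih =>
      intro hj
      exact bstep hn he hj (ih (by omega))

/-- The central lemma: lifting `GoodSet (n-1)` sets. -/
lemma phi {n : ℕ} (hn3 : 3 ≤ n) : ∀ {W : Finset ℕ}, GoodSet (n - 1) W →
    ∀ e, 1 ≤ e → GoodSet n (insert 1 (dl (2 ^ e) W)) := by
  intro W hW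
  induction hW with
  | base j hj =>
      intro e he
      have hIcc : Finset.Icc j (j + (n - 1)) = Finset.Icc j (j + n - 1) := by
        congr 1
        omega
      rw [hIcc]
      exact bj (by omega) e he j (by omega)
  | dilate S hS ih =>
      intro e he
      have hd : dl (2 ^ e) (S.image (fun s => 2 * s)) = dl (2 ^ (e + 1)) S := by
        rw [show S.image (fun s => 2 * s) = dl 2 S from rfl, dl_dl, ← pow_succ]
      rw [hd]
      exact ih (e + 1) (by omega)
  | elim S T a hS hT hcard hmem ihS ihT =>
      intro e he
      have hq2 : 2 ≤ 2 ^ e := two_le_pow he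
      have hq0 : (0 : ℕ) < 2 ^ e := by omega
      have hINT : insert 1 (dl (2 ^ e) S) ∩ insert 1 (dl (2 ^ e) T)
          = insert 1 (dl (2 ^ e) (S ∩ T)) := by
        rw [show dl (2 ^ e) (S ∩ T) = dl (2 ^ e) S ∩ dl (2 ^ e) T from
          Finset.image_inter S T (dl_injOn _ hq0), Finset.insert_inter_distrib]
      have h1 : (1 : ℕ) ∉ dl (2 ^ e) (S ∩ T) := one_not_dl hq2 _
      have hcard' : (insert 1 (dl (2 ^ e) S) ∩ insert 1 (dl (2 ^ e) T)).card = n := by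
        rw [hINT, Finset.card_insert_of_notMem h1,
          show dl (2 ^ e) (S ∩ T) = (S ∩ T).image (fun x => 2 ^ e * x) from rfl,
          Finset.card_image_of_injective _ (dl_injOn _ hq0), hcard]
        omega
      have hmem' : 2 ^ e * a ∈ insert 1 (dl (2 ^ e) S) ∩ insert 1 (dl (2 ^ e) T) := by
        rw [hINT]
        exact Finset.mem_insert_of_mem (Finset.mem_image_of_mem _ hmem)
      have h := GoodSet.elim _ _ (2 ^ e * a) (ihS e he) (ihT e he) hcard' hmem'
      have hne1 : 2 ^ e * a ≠ 1 := by
        intro hcon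
        obtain ⟨h1', _⟩ := mul_one_aux hcon
        omega
      have hfin : (insert 1 (dl (2 ^ e) S) ∪ insert 1 (dl (2 ^ e) T)).erase (2 ^ e * a)
          = insert 1 (dl (2 ^ e) ((S ∪ T).erase a)) := by
        rw [← Finset.insert_union_distrib, Finset.erase_insert_of_ne hne1.symm,
          dl_erase _ _ hq0]
        congr 2
        rw [show dl (2 ^ e) (S ∪ T) = (S ∪ T).image (fun x => 2 ^ e * x) from rfl,
          Finset.image_union]
        rfl
      rwa [hfin] at h

end CE


theorem combinatorial_elimination (n : ℕ) (hn : 2 ≤ n) :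
    GoodSet n (insert 0 ((Finset.range n).image (fun k => 2 ^ k))) := by
  induction n, hn using Nat.le_induction with
  | base =>
      have h : insert 0 ((Finset.range 2).image (fun k => 2 ^ k)) = Finset.Icc 0 (0 + 2) := by
        decide
      exact h ▸ GoodSet.base 0 (by omega)
  | succ n hn ih =>
      have hW : GoodSet (n + 1 - 1) (insert 0 ((Finset.range n).image (fun k => 2 ^ k))) := by
        simpa using ih
      have h := CE.phi (by omega) hW 1 le_rfl
      have heq : insert 1 (CE.dl (2 ^ 1) (insert 0 ((Finset.range n).image (fun k => 2 ^ k))))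
          = insert 0 ((Finset.range (n + 1)).image (fun k => 2 ^ k)) := by
        ext x
        simp only [CE.dl, Finset.mem_insert, Finset.mem_image, Finset.mem_range, pow_one]
        constructor
        · rintro (rfl | ⟨b, (rfl | ⟨k, hk, rfl⟩), rfl⟩)
          · exact Or.inr ⟨0, by omega, rfl⟩
          · exact Or.inl (by ring)
          · refine Or.inr ⟨k + 1, by omega, ?_⟩
            rw [pow_succ]
            ring
        · rintro (rfl | ⟨k, hk, rfl⟩)
          · exact Or.inr ⟨0, Or.inl rfl, by ring⟩
          · rcases Nat.eq_zero_or_pos k with rfl | hk0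
            · exact Or.inl (by norm_num)
            · obtain ⟨m, rfl⟩ : ∃ m, k = m + 1 := ⟨k - 1, by omega⟩
              refine Or.inr ⟨2 ^ m, Or.inr ⟨m, by omega, rfl⟩, ?_⟩
              rw [pow_succ]
              ring
      rwa [heq] at h
end

section
/- Let 𝒮 be the smallest collection of sets of non-negative integers containing {0,1,2,3,4}, {1,2,3,4,5}, {2,3,4,5,6}, closed under dilation S ↦ 2S, and closed under elimination: if S,T ∈ 𝒮 with |S ∩ T| = 4 and a ∈ S ∩ T then (S ∪ T) \ {a} ∈ 𝒮. Then {0,1,2,4,8} ∈ 𝒮. -/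
/-- The smallest collection of finite sets of non-negative integers containing
`{0,1,2,3,4}`, `{1,2,3,4,5}` and `{2,3,4,5,6}`, closed under dilation by 2 and
elimination of a common element between two sets sharing exactly 4 elements. -/
inductive GoodSet4 : Finset ℕ → Prop
  | base₀ : GoodSet4 {0, 1, 2, 3, 4}
  | base₁ : GoodSet4 {1, 2, 3, 4, 5}
  | base₂ : GoodSet4 {2, 3, 4, 5, 6}
  | dilate (S : Finset ℕ) : GoodSet4 S → GoodSet4 (S.image (fun s => 2 * s))
  | elim (S T : Finset ℕ) (a : ℕ) : GoodSet4 S → GoodSet4 T →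
      (S ∩ T).card = 4 → a ∈ S ∩ T → GoodSet4 ((S ∪ T).erase a)

theorem combinatorial_elimination_n4 : GoodSet4 {0, 1, 2, 4, 8} := by
  have hB : GoodSet4 {0, 2, 4, 6, 8} := by
    have := GoodSet4.dilate _ GoodSet4.base₀
    have h : (({0,1,2,3,4} : Finset ℕ).image (fun s => 2 * s)) = {0,2,4,6,8} := by decide
    rwa [h] at this
  have hC : GoodSet4 {1, 2, 3, 4, 6} := by
    have := GoodSet4.elim _ _ 5 GoodSet4.base₁ GoodSet4.base₂ (by decide) (by decide)
    have h : ((({1,2,3,4,5} : Finset ℕ) ∪ {2,3,4,5,6}).erase 5) = {1,2,3,4,6} := by decide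
    rwa [h] at this
  have hD : GoodSet4 {0, 1, 2, 4, 6} := by
    have := GoodSet4.elim _ _ 3 GoodSet4.base₀ hC (by decide) (by decide)
    have h : ((({0,1,2,3,4} : Finset ℕ) ∪ {1,2,3,4,6}).erase 3) = {0,1,2,4,6} := by decide
    rwa [h] at this
  have := GoodSet4.elim _ _ 6 hB hD (by decide) (by decide)
  have h : ((({0,2,4,6,8} : Finset ℕ) ∪ {0,1,2,4,6}).erase 6) = {0,1,2,4,8} := by decide
  rwa [h] at this
end

section
/- For every n ≥ 1 there exists a nonzero constant λ_n such that λ_n Δ̃_n(x,h;f) satisfies the n-th Vandermonde conditions, i.e., writing λ_n Δ̃_n(x,h;f) = Σ_i A_i f(x + a_i h), one has Σ_i A_i a_i^j = n!·δ_{jn} for j = 0,...,n. Consequently, if f has an n-th Peano derivative at x, then lim_{h→0} λ_n Δ̃_n(x,h;f)/h^n = f_{(n)}(x). -/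
open Filter Topology

/-- Marcinkiewicz–Zygmund differences: `MZ f x m h = Δ̃_{m+1}(x,h;f)`, i.e.
`Δ̃₁(x,h;f) = f(x+h) - f(x)` and `Δ̃ₙ(x,h;f) = Δ̃_{n-1}(x,2h;f) - 2^{n-1} Δ̃_{n-1}(x,h;f)`. -/
def MZ (f : ℝ → ℝ) (x : ℝ) : ℕ → ℝ → ℝ
  | 0, h => f (x + h) - f x
  | (m + 1), h => MZ f x m (2 * h) - 2 ^ (m + 1) * MZ f x m h

noncomputable def MZC : ℕ → ℝ
  | 0 => -1
  | (m+1) => (1 - 2 ^ (m+1)) * MZC m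

noncomputable def MZB : ℕ → ℕ → ℝ
  | 0, 0 => 1
  | 0, (_+1) => 0
  | (m+1), 0 => -(2 ^ (m+1)) * MZB m 0
  | (m+1), (k+1) => MZB m k - 2 ^ (m+1) * MZB m (k+1)

lemma MZB_zero {m k : ℕ} (h : m < k) : MZB m k = 0 := by
  induction m generalizing k with
  | zero => obtain ⟨k, rfl⟩ := Nat.exists_eq_add_of_lt h; simp [MZB]
  | succ m ih =>
    obtain ⟨j, rfl⟩ := Nat.exists_eq_add_of_lt h
    rw [show m + 1 + j + 1 = (m + j + 1) + 1 by ring]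
    rw [MZB, ih (by omega), ih (by omega)]
    ring

lemma MZ_expand (m : ℕ) (f : ℝ → ℝ) (x h : ℝ) :
    MZ f x m h = MZC m * f x + ∑ k ∈ Finset.range (m + 1), MZB m k * f (x + 2 ^ k * h) := by
  induction m generalizing h with
  | zero => simp [MZ, MZC, MZB]; ring
  | succ m ih =>
    rw [MZ, ih, ih]
    rw [Finset.sum_range_succ' (fun k => MZB (m+1) k * f (x + 2 ^ k * h)) (m+1)]
    have e1 : ∀ k, MZB (m+1) (k+1) * f (x + 2 ^ (k+1) * h)
        = MZB m k * f (x + 2 ^ k * (2*h)) - 2^(m+1) * (MZB m (k+1) * f (x + 2^(k+1) * h)) := by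
      intro k
      rw [MZB]
      have : (x + 2 ^ (k+1) * h) = x + 2 ^ k * (2*h) := by ring
      rw [this]
      ring_nf
    simp only [e1]
    rw [Finset.sum_sub_distrib]
    have e2 : ∑ k ∈ Finset.range (m+1), 2^(m+1) * (MZB m (k+1) * f (x + 2^(k+1) * h))
        = 2^(m+1) * ((∑ k ∈ Finset.range (m+1), MZB m k * f (x + 2^k * h)) - MZB m 0 * f (x + 2^0 * h)) := by
      rw [← Finset.mul_sum]
      congr 1
      have e3 := Finset.sum_range_succ' (fun k => MZB m k * f (x + 2 ^ k * h)) (m+1)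
      rw [Finset.sum_range_succ (fun k => MZB m k * f (x + 2 ^ k * h)) (m+1),
        MZB_zero (Nat.lt_succ_self m)] at e3
      rw [zero_mul, add_zero] at e3
      linarith
    rw [e2, MZB, MZC]
    ring

noncomputable def Qv (j : ℕ) : ℕ → ℝ
  | 0 => 1 - (0:ℝ)^j
  | (m+1) => ((2:ℝ)^j - 2^(m+1)) * Qv j m

lemma MZ_pow (j m : ℕ) (h : ℝ) :
    MZ (fun t => t ^ j) 0 m h = Qv j m * h ^ j := by
  induction m generalizing h with
  | zero =>
    cases j with
    | zero => simp [MZ, Qv]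
    | succ j => simp [MZ, Qv, zero_pow]
  | succ m ih => rw [MZ, ih, ih, Qv, mul_pow]; ring

lemma Qv_eq_zero {j m : ℕ} (h : j ≤ m) : Qv j m = 0 := by
  induction m with
  | zero => interval_cases j; simp [Qv]
  | succ m ih =>
    rcases Nat.lt_or_ge j (m+1) with hj | hj
    · rw [Qv, ih (by omega)]; ring
    · have : j = m + 1 := le_antisymm h hj
      subst this; rw [Qv]; simp

lemma Qv_pos {j m : ℕ} (h : m < j) : 0 < Qv j m := by
  induction m with
  | zero =>
    have : (0:ℝ)^j = 0 := zero_pow (by omega)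
    rw [Qv, this]; norm_num
  | succ m ih =>
    rw [Qv]
    have h1 : (2:ℝ)^(m+1) < 2^j := by
      apply pow_lt_pow_right₀ (by norm_num) (by omega)
    have := ih (by omega)
    nlinarith

lemma Qv_vand (j m : ℕ) :
    MZC m * (0:ℝ)^j + ∑ k ∈ Finset.range (m + 1), MZB m k * ((2:ℝ)^k)^j = Qv j m := by
  have := MZ_expand m (fun t => t ^ j) 0 1
  rw [MZ_pow] at this
  simp only [zero_add, mul_one, one_pow] at this
  rw [← this]

lemma MZ_add (f g : ℝ → ℝ) (x : ℝ) (m : ℕ) (h : ℝ) :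
    MZ (fun t => f t + g t) x m h = MZ f x m h + MZ g x m h := by
  induction m generalizing h with
  | zero => simp [MZ]; ring
  | succ m ih => simp only [MZ, ih]; ring

lemma MZ_const_mul (a : ℝ) (f : ℝ → ℝ) (x : ℝ) (m : ℕ) (h : ℝ) :
    MZ (fun t => a * f t) x m h = a * MZ f x m h := by
  induction m generalizing h with
  | zero => simp [MZ]; ring
  | succ m ih => simp only [MZ, ih]; ring

lemma MZ_zero (x : ℝ) (m : ℕ) (h : ℝ) : MZ (fun _ => (0:ℝ)) x m h = 0 := by
  induction m generalizing h with
  | zero => simp [MZ]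
  | succ m ih => simp [MZ, ih]

lemma MZ_sum {ι : Type*} (s : Finset ι) (F : ι → ℝ → ℝ) (x : ℝ) (m : ℕ) (h : ℝ) :
    MZ (fun t => ∑ i ∈ s, F i t) x m h = ∑ i ∈ s, MZ (F i) x m h := by
  classical
  induction s using Finset.induction with
  | empty => simpa using MZ_zero x m h
  | insert _ _ hi ih =>
    rw [Finset.sum_insert hi, ← ih, ← MZ_add]
    simp [Finset.sum_insert hi]

lemma MZ_shift (f : ℝ → ℝ) (x : ℝ) (m : ℕ) (h : ℝ) :
    MZ f x m h = MZ (fun u => f (x + u)) 0 m h := by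
  induction m generalizing h with
  | zero => simp [MZ]
  | succ m ih => simp only [MZ, ih]

/-- For every `n ≥ 1` (here `n = m + 1`) there is a nonzero `λₙ` such that `λₙ Δ̃ₙ`
is an `n`-th generalized Riemann difference (satisfies the `n`-th Vandermonde
conditions); consequently it computes the `n`-th Peano derivative whenever the
latter exists. -/
theorem MZ_is_generalized_riemann (m : ℕ) :
    ∃ lam : ℝ, lam ≠ 0 ∧ ∃ A : ℕ → ℝ,
      (∀ (f : ℝ → ℝ) (x h : ℝ),
        lam * MZ f x m h =
          A 0 * f x + ∑ k ∈ Finset.range (m + 1), A (k + 1) * f (x + 2 ^ k * h)) ∧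
      (∀ j ≤ m + 1,
        A 0 * (0 : ℝ) ^ j + ∑ k ∈ Finset.range (m + 1), A (k + 1) * ((2 : ℝ) ^ k) ^ j =
          if j = m + 1 then ((m + 1).factorial : ℝ) else 0) ∧
      (∀ (f : ℝ → ℝ) (x : ℝ) (c : ℕ → ℝ),
        ((fun h : ℝ => f (x + h) - ∑ j ∈ Finset.range (m + 2), c j * h ^ j / (j.factorial : ℝ))
          =o[𝓝 0] fun h : ℝ => h ^ (m + 1)) →
        Tendsto (fun h : ℝ => lam * MZ f x m h / h ^ (m + 1)) (𝓝[≠] 0) (𝓝 (c (m + 1)))) := by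
  have hQpos : 0 < Qv (m + 1) m := Qv_pos (Nat.lt_succ_self m)
  have hQ : Qv (m + 1) m ≠ 0 := hQpos.ne'
  set lam : ℝ := ((m + 1).factorial : ℝ) / Qv (m + 1) m with hlam
  have hfac : ((m + 1).factorial : ℝ) ≠ 0 := Nat.cast_ne_zero.2 (Nat.factorial_ne_zero _)
  have hlam0 : lam ≠ 0 := div_ne_zero hfac hQ
  refine ⟨lam, hlam0, fun i => lam * (if i = 0 then MZC m else MZB m (i - 1)), ?_, ?_, ?_⟩
  · intro f x h
    rw [MZ_expand, mul_add, Finset.mul_sum]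
    congr 1
    · simp [mul_assoc]
    · exact Finset.sum_congr rfl fun k _ => by simp; ring
  · intro j hj
    have key : (lam * (if 0 = 0 then MZC m else MZB m (0 - 1))) * (0:ℝ) ^ j
        + ∑ k ∈ Finset.range (m + 1),
            (lam * (if k + 1 = 0 then MZC m else MZB m (k + 1 - 1))) * ((2:ℝ) ^ k) ^ j
        = lam * Qv j m := by
      rw [← Qv_vand j m, mul_add, Finset.mul_sum]
      congr 1
      · simp; ring
      · exact Finset.sum_congr rfl fun k _ => by simp; ring
    rw [key]
    rcases eq_or_lt_of_le hj with rfl | hj'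
    · rw [if_pos rfl, hlam, div_mul_cancel₀ _ hQ]
    · rw [if_neg (by omega), Qv_eq_zero (by omega), mul_zero]
  · intro f x c hc
    set g : ℝ → ℝ :=
      fun h => f (x + h) - ∑ j ∈ Finset.range (m + 2), c j * h ^ j / (j.factorial : ℝ) with hg
    -- g 0 = 0
    have hg0 : g 0 = 0 := by
      have h1 := (hc.def one_pos).self_of_nhds
      simp only [zero_pow (Nat.succ_ne_zero m), norm_zero, mul_zero] at h1
      exact norm_le_zero_iff.1 h1
    -- decomposition
    have decomp : ∀ h : ℝ, lam * MZ f x m h = c (m + 1) * h ^ (m + 1) + lam * MZ g 0 m h := by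
      intro h
      have e1 : (fun u => f (x + u)) =
          fun u => (∑ j ∈ Finset.range (m + 2), c j * u ^ j / (j.factorial : ℝ)) + g u := by
        funext u; simp [hg]
      rw [MZ_shift, e1, MZ_add, MZ_sum, mul_add]
      congr 1
      have e2 : ∀ j ∈ Finset.range (m + 2),
          MZ (fun t => c j * t ^ j / (j.factorial : ℝ)) 0 m h
            = (c j / (j.factorial : ℝ)) * (Qv j m * h ^ j) := by
        intro j _
        have : (fun t => c j * t ^ j / (j.factorial : ℝ))
            = fun t => (c j / (j.factorial : ℝ)) * t ^ j := by funext t; ring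
        rw [this, MZ_const_mul, MZ_pow]
      rw [Finset.sum_congr rfl e2]
      rw [Finset.sum_eq_single_of_mem (m + 1) (Finset.self_mem_range_succ (m + 1))
        (fun j hjm hj => by
          rw [Qv_eq_zero (by simp only [Finset.mem_range] at hjm; omega)]; ring)]
      rw [hlam]
      field_simp
    -- littleO of the remainder
    have hE : (fun h => lam * MZ g 0 m h) =o[𝓝 0] fun h : ℝ => h ^ (m + 1) := by
      have expand : ∀ h : ℝ, lam * MZ g 0 m h
          = ∑ k ∈ Finset.range (m + 1), lam * MZB m k * g (2 ^ k * h) := by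
        intro h
        rw [MZ_expand, hg0, mul_zero, mul_add, mul_zero, zero_add, Finset.mul_sum]
        exact Finset.sum_congr rfl fun k _ => by rw [zero_add]; ring
      have : (fun h => ∑ k ∈ Finset.range (m + 1), lam * MZB m k * g (2 ^ k * h))
          =o[𝓝 0] fun h : ℝ => h ^ (m + 1) := by
        apply Asymptotics.IsLittleO.fun_sum
        intro k _
        have ht : Tendsto (fun h : ℝ => (2:ℝ) ^ k * h) (𝓝 0) (𝓝 0) := by
          simpa using (tendsto_id : Tendsto id (𝓝 (0:ℝ)) (𝓝 0)).const_mul ((2:ℝ) ^ k)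
        have h1 : (fun h : ℝ => g (2 ^ k * h)) =o[𝓝 0] fun h : ℝ => (2 ^ k * h) ^ (m + 1) :=
          hc.comp_tendsto ht
        have h2 : (fun h : ℝ => ((2:ℝ) ^ k * h) ^ (m + 1)) =O[𝓝 0] fun h : ℝ => h ^ (m + 1) := by
          have : (fun h : ℝ => ((2:ℝ) ^ k * h) ^ (m + 1))
              = fun h : ℝ => ((2:ℝ) ^ k) ^ (m + 1) * h ^ (m + 1) := by
            funext h; rw [mul_pow]
          rw [this]
          exact (Asymptotics.isBigO_refl _ _).const_mul_left _
        exact ((h1.trans_isBigO h2).const_mul_left _)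
      exact this.congr' (by filter_upwards with h using (expand h).symm) (by rfl)
    -- conclude
    have hdiv : Tendsto (fun h : ℝ => lam * MZ g 0 m h / h ^ (m + 1)) (𝓝 0) (𝓝 0) :=
      hE.tendsto_div_nhds_zero
    have hmain : Tendsto (fun h : ℝ => c (m + 1) + lam * MZ g 0 m h / h ^ (m + 1))
        (𝓝[≠] 0) (𝓝 (c (m + 1))) := by
      have := (tendsto_const_nhds (x := c (m + 1)) (f := 𝓝[≠] (0:ℝ))).add
        (hdiv.mono_left nhdsWithin_le_nhds)
      simpa using this
    apply hmain.congr'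
    filter_upwards [self_mem_nhdsWithin] with h hh
    rw [decomp h, add_div]
    congr 1
    rw [mul_div_assoc, div_self (pow_ne_zero _ hh), mul_one]
end

section
/- If f: ℝ → ℝ has an n-th Peano derivative at x, then the n-th forward Riemann derivative exists at x and equals it: lim_{h→0} h^{-n} Σ_{i=0}^n (-1)^i C(n,i) f(x + (n-i)h) = f_{(n)}(x). -/
open Filter Topology
open scoped fwdDiff

lemma fwdDiff_pow_expand (h : ℝ) (j : ℕ) :
    fwdDiff h (fun t : ℝ => t ^ j)
      = ∑ k ∈ Finset.range j, ((j.choose k : ℝ) * h ^ (j - k)) • (fun t : ℝ => t ^ k) := by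
  funext t
  simp only [fwdDiff, Finset.sum_apply, Pi.smul_apply, smul_eq_mul]
  rw [add_pow, Finset.sum_range_succ, Nat.sub_self, pow_zero, Nat.choose_self, Nat.cast_one,
    mul_one, mul_one, add_sub_cancel_right]
  exact Finset.sum_congr rfl fun k _ => by ring

lemma fwdDiff_iter_pow (h : ℝ) :
    ∀ n j : ℕ, j ≤ n →
    (fwdDiff h)^[n] (fun t : ℝ => t ^ j)
      = fun _ => if j = n then (n.factorial : ℝ) * h ^ n else 0 := by
  intro n
  induction n with
  | zero =>
    intro j hj
    obtain rfl := Nat.le_zero.mp hj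
    simp
  | succ n IH =>
    intro j hj
    rw [Function.iterate_succ_apply, fwdDiff_pow_expand, fwdDiff_iter_finset_sum]
    funext y
    rw [Finset.sum_apply]
    have hterm : ∀ k ∈ Finset.range j,
        ((fwdDiff h)^[n] (((j.choose k : ℝ) * h ^ (j - k)) • fun t : ℝ => t ^ k)) y
          = if k = n then ((j.choose k : ℝ) * h ^ (j - k)) * ((n.factorial : ℝ) * h ^ n)
            else 0 := by
      intro k hk
      have hk' : k ≤ n := by
        have := Finset.mem_range.mp hk; omega
      rw [fwdDiff_iter_const_smul, IH k hk']
      by_cases hkn : k = n <;> simp [hkn]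
    rw [Finset.sum_congr rfl hterm]
    by_cases hjn : j = n + 1
    · subst hjn
      rw [Finset.sum_ite_eq' (Finset.range (n + 1)) n]
      simp [Nat.choose_succ_self_right, Nat.factorial_succ, Nat.succ_sub_one]
      ring
    · have hj' : j ≤ n := by omega
      rw [Finset.sum_eq_zero, if_neg hjn]
      intro k hk
      have : k < j := Finset.mem_range.mp hk
      rw [if_neg (by omega)]

lemma fwdDiff_iter_poly (h : ℝ) (n : ℕ) (c : ℕ → ℝ) :
    (fwdDiff h)^[n] (fun t : ℝ => ∑ j ∈ Finset.range (n + 1), c j * t ^ j / (j.factorial : ℝ)) 0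
      = c n * h ^ n := by
  have hfun : (fun t : ℝ => ∑ j ∈ Finset.range (n + 1), c j * t ^ j / (j.factorial : ℝ))
      = ∑ j ∈ Finset.range (n + 1), (c j / (j.factorial : ℝ)) • (fun t : ℝ => t ^ j) := by
    funext t
    simp only [Finset.sum_apply, Pi.smul_apply, smul_eq_mul]
    exact Finset.sum_congr rfl fun j _ => by ring
  rw [hfun, fwdDiff_iter_finset_sum]
  rw [Finset.sum_apply]
  have hterm : ∀ j ∈ Finset.range (n + 1),
      ((fwdDiff h)^[n] ((c j / (j.factorial : ℝ)) • fun t : ℝ => t ^ j)) 0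
        = if j = n then c n * h ^ n else 0 := by
    intro j hj
    have hj' : j ≤ n := by
      have := Finset.mem_range.mp hj; omega
    rw [fwdDiff_iter_const_smul, fwdDiff_iter_pow h n j hj']
    by_cases hjn : j = n
    · subst hjn
      have : (j.factorial : ℝ) ≠ 0 := Nat.cast_ne_zero.mpr j.factorial_ne_zero
      simp only [if_pos rfl, Pi.smul_apply, smul_eq_mul]
      field_simp
      rw [if_pos trivial, if_pos trivial]
      ring
    · simp [hjn]
  rw [Finset.sum_congr rfl hterm, Finset.sum_ite_eq' (Finset.range (n + 1)) n]
  simp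

lemma sum_eq_fwdDiff (g : ℝ → ℝ) (n : ℕ) (h : ℝ) :
    ∑ i ∈ Finset.range (n + 1), (-1 : ℝ) ^ i * (n.choose i : ℝ) * g (((n : ℝ) - (i : ℝ)) * h)
      = (fwdDiff h)^[n] g 0 := by
  rw [fwdDiff_iter_eq_sum_shift, ← Finset.sum_range_reflect]
  refine Finset.sum_congr rfl fun i hi => ?_
  have hi' : i ≤ n := by
    have := Finset.mem_range.mp hi; omega
  simp only [Nat.add_sub_cancel, zero_add, nsmul_eq_mul, zsmul_eq_mul]
  rw [Nat.choose_symm hi']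
  have harg : ((n : ℝ) - ((n - i : ℕ) : ℝ)) * h = (i : ℝ) * h := by
    rw [Nat.cast_sub hi']; ring
  rw [harg]
  push_cast
  ring

theorem peano_implies_forward_riemann
    (f : ℝ → ℝ) (x : ℝ) (n : ℕ) (c : ℕ → ℝ)
    (hPeano : (fun h : ℝ => f (x + h) - ∑ j ∈ Finset.range (n + 1), c j * h ^ j / (j.factorial : ℝ))
      =o[𝓝 0] fun h : ℝ => h ^ n) :
    Tendsto
      (fun h : ℝ =>
        (∑ i ∈ Finset.range (n + 1),
          (-1 : ℝ) ^ i * (n.choose i : ℝ) * f (x + ((n : ℝ) - (i : ℝ)) * h)) / h ^ n)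
      (𝓝[≠] 0) (𝓝 (c n)) := by
  set E : ℝ → ℝ := fun h => f (x + h) - ∑ j ∈ Finset.range (n + 1),
    c j * h ^ j / (j.factorial : ℝ) with hE
  set T : ℝ → ℝ := fun h => ∑ i ∈ Finset.range (n + 1),
    (-1 : ℝ) ^ i * (n.choose i : ℝ) * f (x + ((n : ℝ) - (i : ℝ)) * h) with hT
  -- Step 1: T h - c n * h ^ n equals the alternating sum of errors
  have hsplit : ∀ h : ℝ, T h - c n * h ^ n
      = ∑ i ∈ Finset.range (n + 1),
          (-1 : ℝ) ^ i * (n.choose i : ℝ) * E (((n : ℝ) - (i : ℝ)) * h) := by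
    intro h
    have h2 : ∑ i ∈ Finset.range (n + 1), (-1 : ℝ) ^ i * (n.choose i : ℝ) *
        (∑ j ∈ Finset.range (n + 1), c j * (((n : ℝ) - (i : ℝ)) * h) ^ j / (j.factorial : ℝ))
        = c n * h ^ n := by
      have h0 := sum_eq_fwdDiff
        (fun t : ℝ => ∑ j ∈ Finset.range (n + 1), c j * t ^ j / (j.factorial : ℝ)) n h
      rw [fwdDiff_iter_poly] at h0
      exact h0
    rw [hT, ← h2, ← Finset.sum_sub_distrib]
    refine Finset.sum_congr rfl fun i _ => ?_
    simp only [hE]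
    ring
  -- Step 2: each error term is little-o of h ^ n
  have hEo : ∀ i : ℕ, (fun h : ℝ => E (((n : ℝ) - (i : ℝ)) * h)) =o[𝓝 (0:ℝ)]
      fun h : ℝ => h ^ n := by
    intro i
    have ht : Tendsto (fun h : ℝ => ((n : ℝ) - (i : ℝ)) * h) (𝓝 0) (𝓝 0) := by
      simpa using (tendsto_id (x := 𝓝 (0:ℝ))).const_mul ((n : ℝ) - (i : ℝ))
    have h1 := hPeano.comp_tendsto ht
    refine Asymptotics.IsLittleO.trans_isBigO h1 ?_
    have heq : ((fun h : ℝ => h ^ n) ∘ fun h : ℝ => ((n : ℝ) - (i : ℝ)) * h)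
        = fun h : ℝ => ((n : ℝ) - (i : ℝ)) ^ n * h ^ n := by
      funext h; simp [Function.comp, mul_pow]
    rw [heq]
    exact (Asymptotics.isBigO_refl _ _).const_mul_left _
  have hsum : (fun h : ℝ => ∑ i ∈ Finset.range (n + 1),
      (-1 : ℝ) ^ i * (n.choose i : ℝ) * E (((n : ℝ) - (i : ℝ)) * h)) =o[𝓝 (0:ℝ)]
      fun h : ℝ => h ^ n :=
    by
      have := Asymptotics.IsLittleO.sum (s := Finset.range (n + 1)) fun i _ =>
        (hEo i).const_mul_left ((-1 : ℝ) ^ i * (n.choose i : ℝ))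
      exact Asymptotics.IsLittleO.congr_left this (fun h => Finset.sum_apply _ _ _)
  have hkey : (fun h : ℝ => T h - c n * h ^ n) =o[𝓝 (0:ℝ)] fun h : ℝ => h ^ n := by
    have := funext hsplit
    rw [show (fun h : ℝ => T h - c n * h ^ n) = _ from this]
    exact hsum
  -- Step 3: conclude
  have h2 : Tendsto (fun h : ℝ => (T h - c n * h ^ n) / h ^ n) (𝓝[≠] 0) (𝓝 0) :=
    (hkey.mono nhdsWithin_le_nhds).tendsto_div_nhds_zero
  have h3 := h2.add (tendsto_const_nhds (x := c n) (f := 𝓝[≠] (0:ℝ)))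
  rw [zero_add] at h3
  refine h3.congr' ?_
  filter_upwards [self_mem_nhdsWithin] with h hh
  have hne : (h : ℝ) ^ n ≠ 0 := pow_ne_zero _ hh
  field_simp
  rw [sub_add_cancel]
end
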